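/- arXiv:2003.13093 — 4 statements merged into one kernel-verified Lean document; each statement's English description precedes it below -/
import Mathlib

section
/- Let U ⊆ ℂ be a nonempty open connected set, N ≥ 1, and let f : U → ℂ^N be holomorphic (complex differentiable at every point of U). Then the ℂ-linear span of the set of derivative values {f'(z) : z ∈ U} is equal to the direction (the associated linear subspace) of the affine span over ℂ of the image f(U). In particular, if the affine span of f(U) is all of ℂ^N, then the derivative values f'(z), z ∈ U, span ℂ^N as a ℂ-vector space. -/
/-- Auxiliary: a function with zero derivative on an open preconnected set is constant. -/
lemma aux_const {U : Set ℂ} (hU : IsOpen U) (hc : IsPreconnected U)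
    {g : ℂ → ℂ} (hg : ∀ z ∈ U, DifferentiableAt ℂ g z)
    (hg' : ∀ z ∈ U, deriv g z = 0) {x y : ℂ} (hx : x ∈ U) (hy : y ∈ U) :
    g y = g x := by
  have hgd : DifferentiableOn ℂ g U := fun z hz => (hg z hz).differentiableWithinAt
  have hga : AnalyticOnNhd ℂ g U := hgd.analyticOnNhd hU
  obtain ⟨ε, hε, hball⟩ := Metric.isOpen_iff.mp hU x hx
  have hconst : ∀ z ∈ Metric.ball x ε, g z = g x := by
    intro z hz
    have hconv : Convex ℝ (Metric.ball x ε) := convex_ball x ε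
    refine hconv.is_const_of_fderivWithin_eq_zero
      (𝕜 := ℂ) (fun w hw => (hg w (hball hw)).differentiableWithinAt) ?_ hz
      (Metric.mem_ball_self hε)
    intro w hw
    have h0 : HasDerivAt g 0 w := by
      have := (hg w (hball hw)).hasDerivAt
      rwa [hg' w (hball hw)] at this
    rw [fderivWithin_of_isOpen Metric.isOpen_ball hw, h0.hasFDerivAt.fderiv]
    ext
    simp
  have hev : g =ᶠ[nhds x] (fun _ => g x) := by
    filter_upwards [Metric.ball_mem_nhds x hε] with z hz using hconst z hz
  have := hga.eqOn_of_preconnected_of_eventuallyEq analyticOnNhd_const hc hx hev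
  exact this hy

/-- For a holomorphic map `f : U → ℂ^N` on a nonempty open connected
set `U ⊆ ℂ`, the ℂ-linear span of the derivative values `{f'(z) : z ∈ U}` equals the
direction of the affine span of the image `f(U)`. In particular, if the affine span of
`f(U)` is all of `ℂ^N`, the derivatives span `ℂ^N`. -/
theorem stmt0 (N : ℕ) (hN : 1 ≤ N) (U : Set ℂ) (hU : IsOpen U)
    (hUconn : IsConnected U) (f : ℂ → (Fin N → ℂ))
    (hf : ∀ z ∈ U, DifferentiableAt ℂ f z) :
    Submodule.span ℂ (deriv f '' U) = (affineSpan ℂ (f '' U)).direction ∧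
    (affineSpan ℂ (f '' U) = ⊤ → Submodule.span ℂ (deriv f '' U) = ⊤) := by
  set V : Submodule ℂ (Fin N → ℂ) := Submodule.span ℂ (deriv f '' U) with hV
  set D := (affineSpan ℂ (f '' U)).direction with hD
  -- differences of values lie in V
  have hdiff : ∀ x ∈ U, ∀ y ∈ U, f y - f x ∈ V := by
    intro x hx y hy
    rw [← Subspace.forall_mem_dualAnnihilator_apply_eq_zero_iff V (f y - f x)]
    intro φ hφ
    have hφ0 : ∀ v ∈ V, φ v = 0 := by
      intro v hv
      exact (Submodule.mem_dualAnnihilator φ).mp hφ v hv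
    set L := LinearMap.toContinuousLinearMap φ with hL
    have hdL : ∀ z ∈ U, DifferentiableAt ℂ (fun w => L (f w)) z := fun z hz =>
      L.differentiableAt.comp z (hf z hz)
    have hdL' : ∀ z ∈ U, deriv (fun w => L (f w)) z = 0 := by
      intro z hz
      have h1 : HasDerivAt (fun w => L (f w)) (L (deriv f z)) z :=
        L.hasFDerivAt.comp_hasDerivAt z (hf z hz).hasDerivAt
      rw [h1.deriv]
      have : deriv f z ∈ V := Submodule.subset_span ⟨z, hz, rfl⟩
      exact hφ0 _ this
    have := aux_const hU hUconn.isPreconnected hdL hdL' hx hy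
    have : φ (f y) = φ (f x) := this
    simp [map_sub, this]
  -- derivatives lie in D
  have hder : ∀ z ∈ U, deriv f z ∈ D := by
    intro z hz
    have hcl : IsClosed (D : Set (Fin N → ℂ)) := D.closed_of_finiteDimensional
    have hs : Filter.Tendsto (slope f z) (nhdsWithin z {z}ᶜ) (nhds (deriv f z)) :=
      hasDerivAt_iff_tendsto_slope.mp (hf z hz).hasDerivAt
    refine hcl.mem_of_tendsto hs ?_
    have hmem : ∀ᶠ y in nhdsWithin z {z}ᶜ, y ∈ U :=
      Filter.eventually_inf_principal.mpr <|
        Filter.eventually_of_mem (hU.mem_nhds hz) (fun y hy _ => hy)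
    filter_upwards [hmem] with y hy
    have h1 : f y -ᵥ f z ∈ D :=
      AffineSubspace.vsub_mem_direction
        (subset_affineSpan ℂ _ ⟨y, hy, rfl⟩) (subset_affineSpan ℂ _ ⟨z, hz, rfl⟩)
    rw [slope_def_module]
    exact D.smul_mem _ h1
  have heq : V = D := by
    apply le_antisymm
    · rw [hV]
      exact Submodule.span_le.mpr (fun v ⟨z, hz, hzv⟩ => hzv ▸ hder z hz)
    · obtain ⟨x, hx⟩ := hUconn.nonempty
      rw [hD, direction_affineSpan]
      rw [vectorSpan_def]
      apply Submodule.span_le.mpr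
      rintro v ⟨a, ⟨za, hza, rfl⟩, b, ⟨zb, hzb, rfl⟩, rfl⟩
      exact hdiff zb hzb za hza
  refine ⟨heq, fun htop => ?_⟩
  rw [heq, hD, htop, AffineSubspace.direction_top]
end

section
/- Let U ⊆ ℂ be a nonempty open connected set, N ≥ 1, and let f : U → ℂ^N be holomorphic. Assume that the affine span over ℂ of the image f(U) is all of ℂ^N. Then for every integer d with 1 ≤ d ≤ N there exist points z₁, …, z_d ∈ U such that the derivative vectors f'(z₁), …, f'(z_d) are linearly independent over ℂ. -/
/-- A function with zero derivative on an open preconnected set is constant there. -/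
lemma aux_const_on {U : Set ℂ} (hU : IsOpen U) (hc : IsPreconnected U) {g : ℂ → ℂ}
    (hg : ∀ z ∈ U, HasDerivAt g 0 z) {x y : ℂ} (hx : x ∈ U) (hy : y ∈ U) : g x = g y := by
  -- local constancy via convexity of balls
  have key : ∀ z ∈ U, ∃ ε > 0, Metric.ball z ε ⊆ U ∧ ∀ w ∈ Metric.ball z ε, g w = g z := by
    intro z hz
    obtain ⟨ε, hε, hball⟩ := Metric.isOpen_iff.mp hU z hz
    refine ⟨ε, hε, hball, fun w hw => ?_⟩
    have hdiff : DifferentiableOn ℂ g (Metric.ball z ε) := fun u hu =>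
      ((hg u (hball hu)).differentiableAt).differentiableWithinAt
    refine (convex_ball z ε).is_const_of_fderivWithin_eq_zero hdiff ?_ hw
      (Metric.mem_ball_self hε)
    intro u hu
    rw [fderivWithin_of_isOpen Metric.isOpen_ball hu]
    have hF : HasFDerivAt g (0 : ℂ →L[ℂ] ℂ) u := by
      have h0 : (ContinuousLinearMap.smulRight (1 : ℂ →L[ℂ] ℂ) (0 : ℂ)) = 0 := by
        ext; simp
      exact h0 ▸ (hg u (hball hu)).hasFDerivAt
    exact hF.fderiv
  -- clopen argument
  by_contra hne
  set S : Set ℂ := {w | w ∈ U ∧ g w = g x} with hS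
  set T : Set ℂ := {w | w ∈ U ∧ g w ≠ g x} with hT
  have hSopen : IsOpen S := by
    rw [Metric.isOpen_iff]
    intro w hw
    obtain ⟨ε, hε, hball, hconst⟩ := key w hw.1
    exact ⟨ε, hε, fun v hv => ⟨hball hv, (hconst v hv).trans hw.2⟩⟩
  have hTopen : IsOpen T := by
    rw [Metric.isOpen_iff]
    intro w hw
    obtain ⟨ε, hε, hball, hconst⟩ := key w hw.1
    exact ⟨ε, hε, fun v hv => ⟨hball hv, by rw [hconst v hv]; exact hw.2⟩⟩
  have hcover : U ⊆ S ∪ T := by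
    intro w hw
    by_cases h : g w = g x
    · exact Or.inl ⟨hw, h⟩
    · exact Or.inr ⟨hw, h⟩
  have h1 : (U ∩ S).Nonempty := ⟨x, hx, hx, rfl⟩
  have h2 : (U ∩ T).Nonempty := ⟨y, hy, hy, fun h => hne h.symm⟩
  obtain ⟨w, _, hwS, hwT⟩ := hc S T hSopen hTopen hcover h1 h2
  exact hwT.2 hwS.2


/-- If `f : U → ℂ^N` is holomorphic on a nonempty open connected set
`U ⊆ ℂ` and the affine span of `f(U)` is all of `ℂ^N`, then for every `1 ≤ d ≤ N`
there are points `z₁, …, z_d ∈ U` with `f'(z₁), …, f'(z_d)` linearly independent. -/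
theorem stmt1 (N : ℕ) (hN : 1 ≤ N) (U : Set ℂ) (hU : IsOpen U)
    (hUconn : IsConnected U) (f : ℂ → (Fin N → ℂ))
    (hf : ∀ z ∈ U, DifferentiableAt ℂ f z)
    (hspan : affineSpan ℂ (f '' U) = ⊤)
    (d : ℕ) (hd1 : 1 ≤ d) (hdN : d ≤ N) :
    ∃ z : Fin d → ℂ, (∀ i, z i ∈ U) ∧
      LinearIndependent ℂ (fun i => deriv f (z i)) := by
  obtain ⟨z₀, hz₀⟩ := hUconn.nonempty
  -- Step 1: the derivatives span all of ℂ^N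
  have hspan' : Submodule.span ℂ (deriv f '' U) = ⊤ := by
    by_contra h
    obtain ⟨φ, hφne, hφ⟩ := Submodule.exists_dual_map_eq_bot_of_lt_top
      (lt_top_iff_ne_top.mpr h) inferInstance
    have hφ0 : ∀ z ∈ U, φ (deriv f z) = 0 := by
      intro z hz
      have hmem : deriv f z ∈ Submodule.span ℂ (deriv f '' U) :=
        Submodule.subset_span ⟨z, hz, rfl⟩
      have : φ (deriv f z) ∈ (Submodule.span ℂ (deriv f '' U)).map φ :=
        Submodule.mem_map_of_mem hmem
      rw [hφ] at this
      exact Submodule.mem_bot ℂ |>.mp this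
    set ψ := LinearMap.toContinuousLinearMap φ with hψ
    have hgz : ∀ z ∈ U, HasDerivAt (fun w => ψ (f w)) 0 z := by
      intro z hz
      have hF : HasDerivAt f (deriv f z) z := (hf z hz).hasDerivAt
      have := ψ.hasFDerivAt.comp_hasDerivAt z hF
      simp [hψ, hφ0 z hz] at this
      exact this
    have hconst : ∀ z ∈ U, φ (f z) = φ (f z₀) := fun z hz =>
      aux_const_on hU hUconn.isPreconnected hgz hz hz₀
    -- φ vanishes on the vector span of f '' U, which is ⊤
    have hvspan : vectorSpan ℂ (f '' U) = ⊤ :=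
      AffineSubspace.vectorSpan_eq_top_of_affineSpan_eq_top ℂ _ _ hspan
    have hker : vectorSpan ℂ (f '' U) ≤ LinearMap.ker φ := by
      rw [vectorSpan_def, Submodule.span_le]
      rintro v ⟨a, ⟨za, hza, rfl⟩, b, ⟨zb, hzb, rfl⟩, rfl⟩
      simp only [SetLike.mem_coe, LinearMap.mem_ker, vsub_eq_sub, map_sub]
      rw [hconst za hza, hconst zb hzb, sub_self]
    rw [hvspan, top_le_iff] at hker
    exact hφne (LinearMap.ker_eq_top.mp hker)
  -- Step 2: extract d linearly independent derivative vectors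
  obtain ⟨t, hts, hspan_t, hli⟩ := exists_linearIndependent ℂ (deriv f '' U)
  rw [hspan'] at hspan_t
  let b : Module.Basis t ℂ (Fin N → ℂ) := Module.Basis.mk hli (by rw [Subtype.range_coe, hspan_t])
  haveI : Fintype t := FiniteDimensional.fintypeBasisIndex b
  have hcard : Fintype.card t = N := by
    have := Module.finrank_eq_card_basis b
    rw [Module.finrank_fin_fun] at this
    omega
  have hdle : Fintype.card (Fin d) ≤ Fintype.card t := by
    rw [Fintype.card_fin, hcard]; exact hdN
  obtain ⟨e⟩ := Function.Embedding.nonempty_of_card_le hdle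
  have hchoice : ∀ i : Fin d, ∃ z, z ∈ U ∧ deriv f z = (e i : Fin N → ℂ) := by
    intro i
    obtain ⟨z, hz, hz'⟩ := hts (e i).2
    exact ⟨z, hz, hz'⟩
  choose z hzU hz using hchoice
  refine ⟨z, hzU, ?_⟩
  have : (fun i => deriv f (z i)) = fun i => ((e i : Fin N → ℂ)) := funext fun i => hz i
  rw [this]
  exact hli.comp e e.injective
end

section
/- Let U ⊆ ℂ be a nonempty open connected set, N ≥ 1, and let f : U → ℂ^N be holomorphic. Assume that the affine span over ℂ of the image f(U) is all of ℂ^N. Then for every integer d ≥ 1 there exists a point z ∈ U such that the ℂ-linear span of the higher derivative vectors f⁽¹⁾(z), f⁽²⁾(z), …, f⁽ᵈ⁾(z) has dimension exactly min(d, N). In particular, if d ≤ N then there exists z ∈ U at which f⁽¹⁾(z), …, f⁽ᵈ⁾(z) are linearly independent over ℂ. -/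
open Filter

section AuxiliaryLemmas

lemma auxdet {n : ℕ} {A : ℂ → Matrix (Fin n) (Fin n) ℂ} {z : ℂ}
    (h : ∀ i j, DifferentiableAt ℂ (fun w => A w i j) z) :
    DifferentiableAt ℂ (fun w => (A w).det) z := by
  simp only [Matrix.det_apply, Units.smul_def, zsmul_eq_mul]
  apply DifferentiableAt.fun_sum
  intro σ _
  exact (differentiableAt_const _).mul (DifferentiableAt.fun_finsetProd fun i _ => h (σ i) i)

lemma auxadj {n : ℕ} {A : ℂ → Matrix (Fin n) (Fin n) ℂ} {z : ℂ}
    (h : ∀ i j, DifferentiableAt ℂ (fun w => A w i j) z) (i j : Fin n) :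
    DifferentiableAt ℂ (fun w => (A w).adjugate i j) z := by
  simp only [Matrix.adjugate_apply]
  apply auxdet
  intro k l
  simp only [Matrix.updateRow_apply]
  by_cases hk : k = j
  · simp [hk]
  · simp only [hk, if_false]; exact h k l

lemma auxD {F : Type*} [NormedAddCommGroup F] [NormedSpace ℂ F] [CompleteSpace F]
    {f : ℂ → F} {U : Set ℂ} (hU : IsOpen U) (hfa : AnalyticOnNhd ℂ f U) (m : ℕ) :
    AnalyticOnNhd ℂ (iteratedDeriv m f) U := by
  induction m with
  | zero => simpa [iteratedDeriv_zero] using hfa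
  | succ m ih => rw [iteratedDeriv_succ]; exact ih.deriv_of_isOpen hU

lemma auxB {F G : Type*} [NormedAddCommGroup F] [NormedSpace ℂ F] [CompleteSpace F]
    [NormedAddCommGroup G] [NormedSpace ℂ G]
    {f : ℂ → F} {U : Set ℂ} (hU : IsOpen U) (hfa : AnalyticOnNhd ℂ f U)
    (g : F →L[ℂ] G) (m : ℕ) :
    ∀ z ∈ U, iteratedDeriv m (fun w => g (f w)) z = g (iteratedDeriv m f z) := by
  induction m with
  | zero => intro z hz; simp [iteratedDeriv_zero]
  | succ m ih =>
    intro z hz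
    rw [iteratedDeriv_succ, iteratedDeriv_succ]
    have hev : iteratedDeriv m (fun w => g (f w)) =ᶠ[nhds z] fun w => g (iteratedDeriv m f w) := by
      filter_upwards [hU.mem_nhds hz] with w hw using ih w hw
    rw [hev.deriv_eq]
    have hD : DifferentiableAt ℂ (iteratedDeriv m f) z := ((auxD hU hfa m) z hz).differentiableAt
    exact (g.hasFDerivAt.comp_hasDerivAt z hD.hasDerivAt).deriv

lemma auxS {F : Type*} [NormedAddCommGroup F] [NormedSpace ℂ F]
    (f : ℂ → F) (c : F) (m : ℕ) :
    iteratedDeriv (m + 1) (fun w => f w - c) = iteratedDeriv (m + 1) f := by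
  rw [iteratedDeriv_succ', iteratedDeriv_succ']
  have : deriv (fun w => f w - c) = deriv f := by
    funext w; exact deriv_sub_const (𝕜 := ℂ) c
  rw [this]

lemma auxT {g : ℂ → ℂ} {z₀ : ℂ} (hg : AnalyticAt ℂ g z₀)
    (h : ∀ n, iteratedDeriv n g z₀ = 0) : g =ᶠ[nhds z₀] 0 := by
  obtain ⟨p, hp⟩ := hg
  obtain ⟨r, hpb⟩ := hp
  have hp1 : ∀ n, p n (fun _ => (1:ℂ)) = 0 := by
    intro n
    have h1 := hpb.factorial_smul (1:ℂ) n
    rw [iteratedFDeriv_apply_eq_iteratedDeriv_mul_prod] at h1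
    simp only [h n, smul_zero] at h1
    have h2 : ((n.factorial : ℂ)) • (p n fun _ => (1:ℂ)) = 0 := by
      rw [← h1]; simp [Nat.cast_smul_eq_nsmul]
    exact (smul_eq_zero.mp h2).resolve_left (Nat.cast_ne_zero.mpr n.factorial_ne_zero)
  have hball : ∀ y ∈ EMetric.ball (0:ℂ) r, g (z₀ + y) = 0 := by
    intro y hy
    have hs := hpb.hasSum hy
    have hzero : (fun n => p n fun _ => y) = fun _ => (0:ℂ) := by
      funext n
      have hy1 : (fun _ : Fin n => y) = fun i : Fin n => y • (1:ℂ) := by funext i; simp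
      rw [hy1, (p n).map_smul_univ, hp1 n, smul_zero]
    rw [hzero] at hs
    exact hs.unique hasSum_zero
  filter_upwards [EMetric.ball_mem_nhds z₀ hpb.r_pos] with z hz
  have hz' : z - z₀ ∈ Metric.eball (0:ℂ) r := by
    rw [EMetric.mem_ball, edist_eq_enorm_sub, sub_zero]
    rw [EMetric.mem_ball, edist_eq_enorm_sub] at hz
    exact hz
  simpa using hball (z - z₀) hz'

/-- Key analytic lemma: the span of all derivatives at any point is everything. -/
lemma auxA {N : ℕ} {U : Set ℂ} (hU : IsOpen U) (hUconn : IsPreconnected U)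
    {f : ℂ → (Fin N → ℂ)} (hfa : AnalyticOnNhd ℂ f U)
    (hspan : affineSpan ℂ (f '' U) = ⊤) {z₀ : ℂ} (hz₀ : z₀ ∈ U)
    (W : Submodule ℂ (Fin N → ℂ)) (hW : ∀ m : ℕ, iteratedDeriv (m+1) f z₀ ∈ W) :
    W = ⊤ := by
  by_contra hWne
  obtain ⟨φ, hφne, hφbot⟩ := Submodule.exists_dual_map_eq_bot_of_lt_top
    (lt_top_iff_ne_top.mpr hWne) inferInstance
  have hφW : ∀ x ∈ W, φ x = 0 := by
    intro x hx
    have : φ x ∈ W.map φ := Submodule.mem_map_of_mem hx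
    rwa [hφbot, Submodule.mem_bot] at this
  set φL := LinearMap.toContinuousLinearMap φ with hφL
  set F : ℂ → (Fin N → ℂ) := fun z => f z - f z₀ with hF
  have hFa : AnalyticOnNhd ℂ F U := fun z hz => (hfa z hz).sub analyticAt_const
  set g : ℂ → ℂ := fun z => φL (F z) with hg
  have hga : AnalyticOnNhd ℂ g U := fun z hz => (φL.analyticAt _).comp (hFa z hz)
  have hg0 : ∀ n, iteratedDeriv n g z₀ = 0 := by
    intro n
    cases n with
    | zero => simp [hg, hF, iteratedDeriv_zero]
    | succ m =>
      rw [auxB hU hFa φL (m+1) z₀ hz₀, auxS f (f z₀) m]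
      have := hφW _ (hW m)
      simpa [hφL] using this
  have hgev : g =ᶠ[nhds z₀] 0 := auxT (hga z₀ hz₀) hg0
  have hgU : Set.EqOn g 0 U := hga.eqOn_zero_of_preconnected_of_eventuallyEq_zero hUconn hz₀ hgev
  -- φ vanishes on all differences
  have hdiff : ∀ a ∈ U, ∀ b ∈ U, φ (f a - f b) = 0 := by
    intro a ha b hb
    have h1 : φ (f a - f z₀) = 0 := hgU ha
    have h2 : φ (f b - f z₀) = 0 := hgU hb
    have : φ (f a - f b) = φ (f a - f z₀) - φ (f b - f z₀) := by
      rw [← map_sub]; ring_nf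
    rw [this, h1, h2, sub_zero]
  -- vectorSpan is top
  have hvs : vectorSpan ℂ (f '' U) = ⊤ := by
    rw [← direction_affineSpan, hspan]
    exact AffineSubspace.direction_top ℂ _ _
  have hφ0 : φ = 0 := by
    refine LinearMap.ext fun x => ?_
    show φ x = 0
    have hxmem : x ∈ vectorSpan ℂ (f '' U) := by rw [hvs]; trivial
    rw [vectorSpan_def] at hxmem
    refine Submodule.span_induction (p := fun x _ => φ x = 0) ?_ (by simp) ?_ ?_ hxmem
    · rintro y ⟨a, ⟨a', ha', rfl⟩, b, ⟨b', hb', rfl⟩, rfl⟩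
      simpa [vsub_eq_sub] using hdiff a' ha' b' hb'
    · intro a b _ _ ha hb; rw [map_add, ha, hb, add_zero]
    · intro c a _ ha; rw [map_smul, ha, smul_zero]
  exact hφne hφ0

lemma auxW {N r : ℕ} {U : Set ℂ} (hU : IsOpen U) (hUconn : IsPreconnected U)
    {f : ℂ → (Fin N → ℂ)} (hfa : AnalyticOnNhd ℂ f U)
    (hspan : affineSpan ℂ (f '' U) = ⊤)
    {z₀ : ℂ} (hz₀ : z₀ ∈ U)
    (hind : LinearIndependent ℂ (fun i : Fin r => iteratedDeriv ((i:ℕ)+1) f z₀))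
    (hdep : ∀ z ∈ U, ¬ LinearIndependent ℂ (fun i : Fin (r+1) => iteratedDeriv ((i:ℕ)+1) f z)) :
    N ≤ r := by
  classical
  set v : Fin r → (Fin N → ℂ) := fun i => iteratedDeriv ((i:ℕ)+1) f z₀ with hv
  -- left inverse
  set T : (Fin r → ℂ) →ₗ[ℂ] (Fin N → ℂ) :=
    { toFun := fun a => ∑ i, a i • v i
      map_add' := by intro a b; simp [add_smul, Finset.sum_add_distrib]
      map_smul' := by intro c a; simp [smul_smul, Finset.smul_sum] } with hT
  have hTker : LinearMap.ker T = ⊥ := by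
    rw [LinearMap.ker_eq_bot']
    intro a ha
    have := Fintype.linearIndependent_iff.mp hind a ha
    funext i; exact this i
  obtain ⟨φ, hφT⟩ := T.exists_leftInverse_of_injective hTker
  have hφv : ∀ i, φ (v i) = Pi.single i 1 := by
    intro i
    have h1 : T (Pi.single i 1) = v i := by
      show (∑ j, (Pi.single i (1:ℂ) : Fin r → ℂ) j • v j) = v i
      simp [Pi.single_apply, ite_smul]
    have := LinearMap.congr_fun hφT (Pi.single i 1)
    rw [LinearMap.comp_apply, h1] at this
    simpa using this
  set φL := LinearMap.toContinuousLinearMap φ with hφL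
  set M : ℂ → Matrix (Fin r) (Fin r) ℂ :=
    fun z => Matrix.of fun i j => φL (iteratedDeriv ((j:ℕ)+1) f z) i with hM
  have hM0 : M z₀ = 1 := by
    ext i j
    show φL (v j) i = (1 : Matrix (Fin r) (Fin r) ℂ) i j
    rw [Matrix.one_apply]
    have : φL (v j) = Pi.single j 1 := hφv j
    rw [this, Pi.single_apply]
  have hMdiff : ∀ (i j : Fin r), ∀ z ∈ U, DifferentiableAt ℂ (fun w => M w i j) z := by
    intro i j z hz
    have h1 : DifferentiableAt ℂ (iteratedDeriv ((j:ℕ)+1) f) z :=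
      ((auxD hU hfa ((j:ℕ)+1)) z hz).differentiableAt
    exact ((ContinuousLinearMap.proj i).comp φL).differentiableAt.comp z h1
  set V : Set ℂ := U ∩ (fun z => (M z).det) ⁻¹' {(0:ℂ)}ᶜ with hVdef
  have hVU : V ⊆ U := Set.inter_subset_left
  have hVopen : IsOpen V := by
    apply ContinuousOn.isOpen_inter_preimage ?_ hU isOpen_compl_singleton
    intro z hz
    exact (auxdet (fun i j => hMdiff i j z hz)).continuousAt.continuousWithinAt
  have hz₀V : z₀ ∈ V := by
    refine ⟨hz₀, ?_⟩
    simp [hM0]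
  have hdetV : ∀ z ∈ V, (M z).det ≠ 0 := fun z hz => hz.2
  -- independence of first r derivatives on V
  have hindV : ∀ z ∈ V, ∀ a : Fin r → ℂ,
      ∑ i, a i • iteratedDeriv ((i:ℕ)+1) f z = 0 → a = 0 := by
    intro z hz a ha
    have hMa : (M z).mulVec a = 0 := by
      funext k
      have := congrArg (fun x => φL x k) ha
      simp only [map_sum, map_smul] at this
      simpa [Matrix.mulVec, dotProduct, hM, mul_comm] using this
    have hMinv : IsUnit (M z).det := isUnit_iff_ne_zero.mpr (hdetV z hz)
    have : ((M z)⁻¹ * (M z)).mulVec a = (M z)⁻¹.mulVec ((M z).mulVec a) :=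
      (Matrix.mulVec_mulVec a _ _).symm
    rw [Matrix.nonsing_inv_mul _ hMinv, hMa, Matrix.mulVec_zero, Matrix.one_mulVec] at this
    exact this
  -- the r+1-st derivative is a combination, with explicit holomorphic coefficients
  set c : ℂ → Fin r → ℂ := fun z i =>
    ∑ j, (((M z).det)⁻¹ * (M z).adjugate i j) * φL (iteratedDeriv (r+1) f z) j with hc
  have hcmv : ∀ z, c z = (M z)⁻¹.mulVec (fun j => φL (iteratedDeriv (r+1) f z) j) := by
    intro z
    funext i
    simp [hc, Matrix.mulVec, dotProduct, Matrix.inv_def, Ring.inverse_eq_inv',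
      Matrix.smul_apply, smul_eq_mul]
  have hceq : ∀ z ∈ V, iteratedDeriv (r+1) f z = ∑ i, c z i • iteratedDeriv ((i:ℕ)+1) f z := by
    intro z hz
    -- from non-independence get a relation
    obtain ⟨g, hgsum, k, hgk⟩ := Fintype.not_linearIndependent_iff.mp (hdep z (hVU hz))
    rw [Fin.sum_univ_castSucc] at hgsum
    simp only [Fin.coe_castSucc, Fin.val_last] at hgsum
    have hglast : g (Fin.last r) ≠ 0 := by
      intro hgl
      rw [hgl, zero_smul, add_zero] at hgsum
      have hcast : (fun i : Fin r => g i.castSucc) = 0 := hindV z hz _ hgsum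
      have hall : ∀ j : Fin (r+1), g j = 0 := by
        intro j
        rcases Fin.eq_castSucc_or_eq_last j with ⟨j', rfl⟩ | rfl
        · exact congrFun hcast j'
        · exact hgl
      exact hgk (hall k)
    set b : Fin r → ℂ := fun i => -(g i.castSucc / g (Fin.last r)) with hb
    have hS : ∑ i : Fin r, g i.castSucc • iteratedDeriv ((i:ℕ)+1) f z
        = - (g (Fin.last r) • iteratedDeriv (r+1) f z) := by
      rw [eq_neg_iff_add_eq_zero]; exact hgsum
    have hrel : iteratedDeriv (r+1) f z = ∑ i, b i • iteratedDeriv ((i:ℕ)+1) f z := by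
      have h2 : ∑ i : Fin r, b i • iteratedDeriv ((i:ℕ)+1) f z
          = ∑ i : Fin r, (-(g (Fin.last r))⁻¹) • (g i.castSucc • iteratedDeriv ((i:ℕ)+1) f z) := by
        apply Finset.sum_congr rfl
        intro i _
        rw [smul_smul]
        congr 1
        rw [hb]
        field_simp
      rw [h2, ← Finset.smul_sum, hS]
      simp [smul_smul, inv_mul_cancel₀ hglast]
    -- identify b with c z
    have hMb : (M z).mulVec b = fun j => φL (iteratedDeriv (r+1) f z) j := by
      funext k
      have := congrArg (fun x => φL x k) hrel
      simp only [map_sum, map_smul] at this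
      simpa [Matrix.mulVec, dotProduct, hM, mul_comm] using this.symm
    have hcb : c z = b := by
      rw [hcmv, ← hMb, Matrix.mulVec_mulVec, Matrix.nonsing_inv_mul _
        (isUnit_iff_ne_zero.mpr (hdetV z hz)), Matrix.one_mulVec]
    rw [hcb]; exact hrel
  have hcdiff : ∀ i : Fin r, ∀ z ∈ V, DifferentiableAt ℂ (fun w => c w i) z := by
    intro i z hz
    apply DifferentiableAt.fun_sum
    intro j _
    have hdet : DifferentiableAt ℂ (fun w => (M w).det) z :=
      auxdet (fun i j => hMdiff i j z (hVU hz))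
    have hinv : DifferentiableAt ℂ (fun w => ((M w).det)⁻¹) z := hdet.inv (hdetV z hz)
    have hadj : DifferentiableAt ℂ (fun w => (M w).adjugate i j) z :=
      auxadj (fun i j => hMdiff i j z (hVU hz)) i j
    have hφD : DifferentiableAt ℂ (fun w => φL (iteratedDeriv (r+1) f w) j) z := by
      have h1 : DifferentiableAt ℂ (iteratedDeriv (r+1) f) z :=
        ((auxD hU hfa (r+1)) z (hVU hz)).differentiableAt
      exact ((ContinuousLinearMap.proj j).comp φL).differentiableAt.comp z h1
    exact (hinv.mul hadj).mul hφD
  -- every derivative is a combination of the first r on V, with holomorphic coefficients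
  have Q : ∀ m : ℕ, ∃ a : ℂ → Fin r → ℂ,
      (∀ i : Fin r, ∀ z ∈ V, DifferentiableAt ℂ (fun w => a w i) z) ∧
      ∀ z ∈ V, iteratedDeriv (m+1) f z = ∑ i, a z i • iteratedDeriv ((i:ℕ)+1) f z := by
    intro m
    induction m with
    | zero =>
      by_cases hr : 0 < r
      · refine ⟨fun _ => Pi.single (⟨0, hr⟩ : Fin r) 1, fun i z _ => differentiableAt_const _, ?_⟩
        intro z hz
        simp [Pi.single_apply, ite_smul]
      · have hr0 : r = 0 := by omega
        subst hr0
        refine ⟨0, fun i z _ => differentiableAt_const _, ?_⟩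
        intro z hz
        obtain ⟨g, hgsum, k, hgk⟩ := Fintype.not_linearIndependent_iff.mp (hdep z (hVU hz))
        have hk : k = 0 := Fin.fin_one_eq_zero k
        rw [Fin.sum_univ_one] at hgsum
        have hg0 : g 0 ≠ 0 := hk ▸ hgk
        have hD0 : iteratedDeriv (0+1) f z = 0 := by
          rcases smul_eq_zero.mp hgsum with h | h
          · exact absurd h hg0
          · simpa using h
        simpa using hD0
    | succ m ih =>
      obtain ⟨a, hadiff, haeq⟩ := ih
      set e : Fin r → ℂ → Fin r → ℂ := fun i z j =>
        if h : ((i:ℕ)+1) < r then (if j = (⟨(i:ℕ)+1, h⟩ : Fin r) then 1 else 0) else c z j with he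
      have hexp : ∀ i : Fin r, ∀ z ∈ V,
          iteratedDeriv ((i:ℕ)+1+1) f z = ∑ j, e i z j • iteratedDeriv ((j:ℕ)+1) f z := by
        intro i z hz
        by_cases h : ((i:ℕ)+1) < r
        · simp only [he, dif_pos h]
          simp [ite_smul]
        · simp only [he, dif_neg h]
          have hieq : (i:ℕ)+1+1 = r+1 := by omega
          rw [hieq]
          exact hceq z hz
      have hediff : ∀ i j : Fin r, ∀ z ∈ V, DifferentiableAt ℂ (fun w => e i w j) z := by
        intro i j z hz
        by_cases h : ((i:ℕ)+1) < r
        · simp only [he, dif_pos h]; exact differentiableAt_const _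
        · simp only [he, dif_neg h]; exact hcdiff j z hz
      refine ⟨fun z j => deriv (fun w => a w j) z + ∑ i, a z i * e i z j, ?_, ?_⟩
      · intro j z hz
        have hda : DifferentiableOn ℂ (fun w => a w j) V :=
          fun w hw => (hadiff j w hw).differentiableWithinAt
        have haan : AnalyticOnNhd ℂ (fun w => a w j) V := hda.analyticOnNhd hVopen
        have h1 : DifferentiableAt ℂ (fun w => deriv (fun w' => a w' j) w) z :=
          ((haan.deriv_of_isOpen hVopen) z hz).differentiableAt
        exact h1.add (DifferentiableAt.fun_sum fun i _ => (hadiff i z hz).mul (hediff i j z hz))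
      · intro z hz
        have hD2 : ∀ i : Fin r,
            HasDerivAt (iteratedDeriv ((i:ℕ)+1) f) (iteratedDeriv ((i:ℕ)+1+1) f z) z := by
          intro i
          have h1 : DifferentiableAt ℂ (iteratedDeriv ((i:ℕ)+1) f) z :=
            ((auxD hU hfa ((i:ℕ)+1)) z (hVU hz)).differentiableAt
          have h2 : iteratedDeriv ((i:ℕ)+1+1) f z = deriv (iteratedDeriv ((i:ℕ)+1) f) z := by
            rw [iteratedDeriv_succ]
          rw [h2]
          exact h1.hasDerivAt
        have hRHS : HasDerivAt (fun w => ∑ i, a w i • iteratedDeriv ((i:ℕ)+1) f w)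
            (∑ i, ((a z i) • iteratedDeriv ((i:ℕ)+1+1) f z
              + (deriv (fun w => a w i) z) • iteratedDeriv ((i:ℕ)+1) f z)) z := by
          apply HasDerivAt.fun_sum
          intro i _
          exact ((hadiff i z hz).hasDerivAt).smul (hD2 i)
        have hev : iteratedDeriv (m+1) f =ᶠ[nhds z]
            fun w => ∑ i, a w i • iteratedDeriv ((i:ℕ)+1) f w := by
          filter_upwards [hVopen.mem_nhds hz] with w hw using haeq w hw
        have hder : iteratedDeriv (m+1+1) f z
            = ∑ i, ((a z i) • iteratedDeriv ((i:ℕ)+1+1) f z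
              + (deriv (fun w => a w i) z) • iteratedDeriv ((i:ℕ)+1) f z) := by
          rw [iteratedDeriv_succ, hev.deriv_eq, hRHS.deriv]
        rw [hder, Finset.sum_add_distrib]
        have h3 : ∑ i, a z i • iteratedDeriv ((i:ℕ)+1+1) f z
            = ∑ j, (∑ i, a z i * e i z j) • iteratedDeriv ((j:ℕ)+1) f z := by
          calc ∑ i, a z i • iteratedDeriv ((i:ℕ)+1+1) f z
              = ∑ i, ∑ j, (a z i * e i z j) • iteratedDeriv ((j:ℕ)+1) f z := by
                refine Finset.sum_congr rfl fun i _ => ?_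
                rw [hexp i z hz, Finset.smul_sum]
                simp [smul_smul]
            _ = ∑ j, ∑ i, (a z i * e i z j) • iteratedDeriv ((j:ℕ)+1) f z := Finset.sum_comm
            _ = ∑ j, (∑ i, a z i * e i z j) • iteratedDeriv ((j:ℕ)+1) f z := by
                refine Finset.sum_congr rfl fun j _ => ?_
                rw [Finset.sum_smul]
        rw [h3, ← Finset.sum_add_distrib]
        refine Finset.sum_congr rfl fun j _ => ?_
        rw [add_smul, add_comm]
  -- conclusion
  set W : Submodule ℂ (Fin N → ℂ) := Submodule.span ℂ (Set.range v) with hWdef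
  have hWall : ∀ m : ℕ, iteratedDeriv (m+1) f z₀ ∈ W := by
    intro m
    obtain ⟨a, _, haeq⟩ := Q m
    rw [haeq z₀ hz₀V]
    exact Submodule.sum_mem _ fun i _ =>
      Submodule.smul_mem _ _ (Submodule.subset_span ⟨i, rfl⟩)
  have hWtop : W = ⊤ := auxA hU hUconn hfa hspan hz₀ W hWall
  have h1 : Module.finrank ℂ W = r := by
    rw [hWdef, finrank_span_eq_card hind, Fintype.card_fin]
  have h2 : Module.finrank ℂ W = N := by
    rw [hWtop, finrank_top]
    simp
  omega

end AuxiliaryLemmas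

/-- If `f : U → ℂ^N` is holomorphic on a nonempty open connected set
`U ⊆ ℂ` with affine span of `f(U)` equal to `ℂ^N`, then for every `d ≥ 1` there is
`z ∈ U` where the span of `f⁽¹⁾(z), …, f⁽ᵈ⁾(z)` has dimension exactly `min d N`;
in particular if `d ≤ N` there is `z ∈ U` where they are linearly independent. -/

theorem stmt2 (N : ℕ) (hN : 1 ≤ N) (U : Set ℂ) (hU : IsOpen U)
    (hUconn : IsConnected U) (f : ℂ → (Fin N → ℂ))
    (hf : ∀ z ∈ U, DifferentiableAt ℂ f z)
    (hspan : affineSpan ℂ (f '' U) = ⊤)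
    (d : ℕ) (hd : 1 ≤ d) :
    (∃ z ∈ U, Module.finrank ℂ
        (Submodule.span ℂ (Set.range fun i : Fin d => iteratedDeriv ((i : ℕ) + 1) f z))
        = min d N) ∧
    (d ≤ N → ∃ z ∈ U,
      LinearIndependent ℂ (fun i : Fin d => iteratedDeriv ((i : ℕ) + 1) f z)) := by
  classical
  have hfd : DifferentiableOn ℂ f U := fun z hz => (hf z hz).differentiableWithinAt
  have hfa : AnalyticOnNhd ℂ f U := hfd.analyticOnNhd hU
  set P : ℕ → Prop := fun k =>
    ∃ z ∈ U, LinearIndependent ℂ (fun i : Fin k => iteratedDeriv ((i:ℕ)+1) f z) with hP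
  have hP0 : P 0 := by
    obtain ⟨z, hz⟩ := hUconn.nonempty
    exact ⟨z, hz, linearIndependent_empty_type⟩
  set r := Nat.findGreatest P d with hr
  have hPr : P r := Nat.findGreatest_spec (Nat.zero_le d) hP0
  have hrd : r ≤ d := Nat.findGreatest_le d
  obtain ⟨z₀, hz₀U, hind⟩ := hPr
  have hfinrank : Module.finrank ℂ (Fin N → ℂ) = N := by simp
  have hrN : r ≤ N := by
    have := hind.fintype_card_le_finrank
    simpa [hfinrank] using this
  have hrmin : r = min d N := by
    refine le_antisymm (le_min hrd hrN) ?_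
    by_contra hlt
    push_neg at hlt
    have hrd' : r < d := lt_of_lt_of_le hlt (min_le_left _ _)
    have hrN' : r < N := lt_of_lt_of_le hlt (min_le_right _ _)
    have hdep : ∀ z ∈ U,
        ¬ LinearIndependent ℂ (fun i : Fin (r+1) => iteratedDeriv ((i:ℕ)+1) f z) := by
      intro z hz hli
      have hPr1 : P (r+1) := ⟨z, hz, hli⟩
      exact Nat.findGreatest_is_greatest (hr ▸ Nat.lt_succ_self r) (by omega) hPr1
    have := auxW hU hUconn.isPreconnected hfa hspan hz₀U hind hdep
    omega
  constructor
  · refine ⟨z₀, hz₀U, ?_⟩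
    set S := Submodule.span ℂ (Set.range fun i : Fin d => iteratedDeriv ((i:ℕ)+1) f z₀) with hS
    have hsub : Submodule.span ℂ
        (Set.range fun i : Fin r => iteratedDeriv ((i:ℕ)+1) f z₀) ≤ S := by
      apply Submodule.span_mono
      rintro _ ⟨i, rfl⟩
      exact ⟨Fin.castLE hrd i, by simp⟩
    have hlow : r ≤ Module.finrank ℂ S := by
      have h1 : Module.finrank ℂ (Submodule.span ℂ
          (Set.range fun i : Fin r => iteratedDeriv ((i:ℕ)+1) f z₀)) = r := by
        rw [finrank_span_eq_card hind, Fintype.card_fin]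
      rw [← h1]
      exact Submodule.finrank_mono hsub
    have hupN : Module.finrank ℂ S ≤ N := by
      have := Submodule.finrank_le S
      rwa [hfinrank] at this
    have hupd : Module.finrank ℂ S ≤ d := by
      refine (finrank_span_le_card _).trans ?_
      have h2 := Fintype.card_range_le (fun i : Fin d => iteratedDeriv ((i:ℕ)+1) f z₀)
      rw [Set.toFinset_card]
      simpa using h2
    omega
  · intro hdN
    have hrd2 : r = d := by omega
    rw [hrd2] at hind
    exact ⟨z₀, hz₀U, hind⟩
end

section
/- Let U ⊆ ℂ be a nonempty open connected set, N ≥ 1, d ≥ 1, and let f : U → ℂ^N be holomorphic. Define F : Uᵈ → ℂ^N (on the open subset Uᵈ ⊆ ℂᵈ) by F(z₁, …, z_d) = f(z₁) + ⋯ + f(z_d). Then: (a) for every point z ∈ Uᵈ, the rank of the Fréchet derivative of F at z (i.e., the dimension of the image of the ℂ-linear map DF(z) : ℂᵈ → ℂ^N) is at most min(d, N); and (b) if moreover the affine span over ℂ of f(U) is all of ℂ^N, then there exists a point z ∈ Uᵈ at which the rank of DF(z) equals min(d, N). -/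
open Set

/-- On an open connected set, a function with zero derivative is constant. -/
lemma const_of_deriv_zero {U : Set ℂ} (hU : IsOpen U) (hUconn : IsConnected U)
    {h : ℂ → ℂ} (hdiff : ∀ w ∈ U, DifferentiableAt ℂ h w)
    (hzero : ∀ w ∈ U, fderiv ℂ h w = 0) {x y : ℂ} (hx : x ∈ U) (hy : y ∈ U) :
    h x = h y := by
  have hdo : DifferentiableOn ℂ h U := fun w hw => (hdiff w hw).differentiableWithinAt
  have han : AnalyticOnNhd ℂ h U := hdo.analyticOnNhd hU
  have hcan : AnalyticOnNhd ℂ (fun _ => h x) U := fun _ _ => analyticAt_const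
  obtain ⟨r, hr, hball⟩ := Metric.isOpen_iff.1 hU x hx
  have hev : h =ᶠ[nhds x] (fun _ => h x) := by
    filter_upwards [Metric.ball_mem_nhds x hr] with w hw
    have hconv : Convex ℝ (Metric.ball x r) := convex_ball x r
    refine hconv.is_const_of_fderivWithin_eq_zero
      (hdo.mono hball) (fun u hu => ?_) hw (Metric.mem_ball_self hr)
    rw [fderivWithin_of_isOpen Metric.isOpen_ball hu]
    exact hzero u (hball hu)
  exact han.eqOn_of_preconnected_of_eventuallyEq hcan hUconn.isPreconnected hx hev hy |>.symm

/-- If the affine span of `f(U)` is everything, the derivatives of `f` span. -/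
lemma span_deriv_top {N : ℕ} {U : Set ℂ} (hU : IsOpen U) (hUconn : IsConnected U)
    {f : ℂ → (Fin N → ℂ)} (hf : ∀ z ∈ U, DifferentiableAt ℂ f z)
    (hspan : affineSpan ℂ (f '' U) = ⊤) :
    Submodule.span ℂ ((fun w => fderiv ℂ f w 1) '' U) = ⊤ := by
  by_contra hne
  obtain ⟨φ, hφ0, hφ⟩ := Submodule.exists_dual_map_eq_bot_of_lt_top
    (lt_top_iff_ne_top.2 hne) inferInstance
  have hφker : ∀ w ∈ U, φ (fderiv ℂ f w 1) = 0 := by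
    intro w hw
    have : φ (fderiv ℂ f w 1) ∈ (Submodule.span ℂ ((fun w => fderiv ℂ f w 1) '' U)).map φ :=
      Submodule.mem_map_of_mem (Submodule.subset_span ⟨w, hw, rfl⟩)
    rw [hφ] at this
    simpa using this
  set φ' : (Fin N → ℂ) →L[ℂ] ℂ := LinearMap.toContinuousLinearMap φ with hφ'
  have hconst : ∀ x ∈ U, ∀ y ∈ U, φ (f x) = φ (f y) := by
    intro x hx y hy
    refine const_of_deriv_zero hU hUconn (h := fun w => φ' (f w))
      (fun w hw => φ'.differentiableAt.comp w (hf w hw)) (fun w hw => ?_) hx hy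
    have hd : fderiv ℂ (fun w => φ' (f w)) w = φ'.comp (fderiv ℂ f w) :=
      (φ'.hasFDerivAt.comp w (hf w hw).hasFDerivAt).fderiv
    rw [hd]
    refine ContinuousLinearMap.ext_ring ?_
    have hk := hφker w hw
    simp at hk ⊢
    exact hk
  have hvs : vectorSpan ℂ (f '' U) = ⊤ := AffineSubspace.vectorSpan_eq_top_of_affineSpan_eq_top (k := ℂ) (V := Fin N → ℂ) (P := Fin N → ℂ) hspan
  apply hφ0
  have hle : vectorSpan ℂ (f '' U) ≤ LinearMap.ker φ := by
    rw [vectorSpan_def]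
    refine Submodule.span_le.2 ?_
    rintro v ⟨-, ⟨x, hx, rfl⟩, -, ⟨y, hy, rfl⟩, rfl⟩
    simp [LinearMap.mem_ker, vsub_eq_sub, hconst x hx y hy]
  rw [hvs] at hle
  ext v
  simpa using hle Submodule.mem_top


/-- For holomorphic `f : U → ℂ^N` on a nonempty open connected set
`U ⊆ ℂ` and `F(z₁,…,z_d) = f(z₁) + ⋯ + f(z_d)` on `Uᵈ`: (a) the rank of the Fréchet
derivative of `F` at any point of `Uᵈ` is at most `min d N`; (b) if the affine span of
`f(U)` is all of `ℂ^N`, there is a point of `Uᵈ` where this rank equals `min d N`. -/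
theorem stmt4 (N d : ℕ) (hN : 1 ≤ N) (hd : 1 ≤ d) (U : Set ℂ) (hU : IsOpen U)
    (hUconn : IsConnected U) (f : ℂ → (Fin N → ℂ))
    (hf : ∀ z ∈ U, DifferentiableAt ℂ f z)
    (F : (Fin d → ℂ) → (Fin N → ℂ))
    (hF : ∀ z, F z = ∑ i, f (z i)) :
    (∀ z : Fin d → ℂ, (∀ i, z i ∈ U) →
      Module.finrank ℂ (LinearMap.range ((fderiv ℂ F z : (Fin d → ℂ) →ₗ[ℂ] (Fin N → ℂ)))) ≤ min d N) ∧
    (affineSpan ℂ (f '' U) = ⊤ →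
      ∃ z : Fin d → ℂ, (∀ i, z i ∈ U) ∧
        Module.finrank ℂ (LinearMap.range ((fderiv ℂ F z : (Fin d → ℂ) →ₗ[ℂ] (Fin N → ℂ)))) = min d N) := by
  classical
  have parta : ∀ z : Fin d → ℂ,
      Module.finrank ℂ (LinearMap.range ((fderiv ℂ F z : (Fin d → ℂ) →ₗ[ℂ] (Fin N → ℂ)))) ≤ min d N := by
    intro z
    refine le_min ?_ ?_
    · calc Module.finrank ℂ (LinearMap.range ((fderiv ℂ F z : (Fin d → ℂ) →ₗ[ℂ] (Fin N → ℂ))))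
          ≤ Module.finrank ℂ (Fin d → ℂ) := LinearMap.finrank_range_le _
        _ = d := by simp
    · calc Module.finrank ℂ (LinearMap.range ((fderiv ℂ F z : (Fin d → ℂ) →ₗ[ℂ] (Fin N → ℂ))))
          ≤ Module.finrank ℂ (Fin N → ℂ) := Submodule.finrank_le _
        _ = N := by simp
  refine ⟨fun z _ => parta z, fun hspan => ?_⟩
  set g : ℂ → (Fin N → ℂ) := fun w => fderiv ℂ f w 1 with hg
  have hgtop : Submodule.span ℂ (g '' U) = ⊤ := span_deriv_top hU hUconn hf hspan
  set m := min d N with hm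
  have hm1 : 1 ≤ m := le_min hd hN
  have hmd : m ≤ d := min_le_left _ _
  have hmN : m ≤ N := min_le_right _ _
  obtain ⟨t, hts, htsp, htind⟩ := exists_linearIndependent ℂ (g '' U)
  have htfin : t.Finite := htind.setFinite
  haveI := htfin.fintype
  have hcardt : Fintype.card t = N := by
    have h1 := finrank_span_set_eq_card htind
    rw [htsp, hgtop, finrank_top] at h1
    rw [← Set.toFinset_card]
    rw [← h1]
    simp
  have hmcard : m ≤ Fintype.card t := le_of_le_of_eq hmN hcardt.symm
  set e : Fin m → t := fun j => (Fintype.equivFin ↥t).symm (Fin.castLE hmcard j) with he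
  have heinj : Function.Injective e :=
    (Fintype.equivFin ↥t).symm.injective.comp (Fin.castLE_injective hmcard)
  set v : Fin m → (Fin N → ℂ) := fun j => (e j : Fin N → ℂ) with hv
  have hvind : LinearIndependent ℂ v := htind.comp e heinj
  have hw : ∀ j : Fin m, ∃ w, w ∈ U ∧ g w = v j := by
    intro j
    obtain ⟨w, hwU, hwe⟩ := hts (e j).2
    exact ⟨w, hwU, hwe⟩
  choose w hwU hgw using hw
  set z : Fin d → ℂ := fun i => if h : (i : ℕ) < m then w ⟨i, h⟩ else w ⟨0, hm1⟩ with hz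
  have hzU : ∀ i, z i ∈ U := by
    intro i
    simp only [hz]
    split <;> exact hwU _
  have hder : HasFDerivAt F
      (∑ i, (fderiv ℂ f (z i)).comp (ContinuousLinearMap.proj i)) z := by
    rw [show F = fun z => ∑ i, f (z i) from funext hF]
    exact HasFDerivAt.fun_sum fun i _ =>
      ((hf (z i) (hzU i)).hasFDerivAt.comp z (hasFDerivAt_apply (𝕜 := ℂ) i z))
  set L : (Fin d → ℂ) →L[ℂ] (Fin N → ℂ) :=
    ∑ i, (fderiv ℂ f (z i)).comp (ContinuousLinearMap.proj i) with hLdef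
  have happ : ∀ i : Fin d, L (Pi.single i 1) = g (z i) := by
    intro i
    simp only [hLdef, ContinuousLinearMap.sum_apply, ContinuousLinearMap.comp_apply,
      ContinuousLinearMap.proj_apply]
    rw [Finset.sum_eq_single i]
    · simp [hg]
    · intro b _ hb
      rw [Pi.single_eq_of_ne hb]
      simp
    · simp
  refine ⟨z, hzU, le_antisymm (parta z) ?_⟩
  rw [hder.fderiv]
  have hrange : Set.range v ⊆ (LinearMap.range (L : (Fin d → ℂ) →ₗ[ℂ] (Fin N → ℂ)) : Set (Fin N → ℂ)) := by
    rintro _ ⟨j, rfl⟩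
    refine ⟨Pi.single (⟨j, lt_of_lt_of_le j.2 hmd⟩ : Fin d) 1, ?_⟩
    rw [ContinuousLinearMap.coe_coe, happ]
    simp only [hz]
    rw [dif_pos j.2]
    rw [Fin.eta]
    exact hgw j
  have hle : Submodule.span ℂ (Set.range v) ≤ LinearMap.range (L : (Fin d → ℂ) →ₗ[ℂ] (Fin N → ℂ)) :=
    Submodule.span_le.2 hrange
  calc m = Fintype.card (Fin m) := (Fintype.card_fin m).symm
    _ = Module.finrank ℂ (Submodule.span ℂ (Set.range v)) := (finrank_span_eq_card hvind).symm
    _ ≤ Module.finrank ℂ (LinearMap.range (L : (Fin d → ℂ) →ₗ[ℂ] (Fin N → ℂ))) := Submodule.finrank_mono hle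
end
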